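/- arXiv:1604.07151 — 4 statements merged into one kernel-verified Lean document; each statement's English description precedes it below -/
import Mathlib

section
/- Let V_c = V(P_{X|Y}|P_Y) > 0 and V_j = V(P_XY) > 0, let θ = (θ1, θ2) with θ1 > 0 and θ2 > −θ1, and define f(γ) = (θ1 + (1−γ)θ2)² / (2(γ V_c + (1−γ) V_j)) for γ ∈ [0,1], g1 = (V_j − V_c)/(2 V_c), and g2 = min{ √(V_j/V_c) − 1, (V_j − V_c)/(V_j + V_c) }. Then inf_{γ∈[0,1]} f(γ) = min{ θ1²/(2 V_c), (θ1+θ2)²/(2 V_j) } holds if and only if θ2/θ1 ≥ g1 or θ2/θ1 ≤ g2. (Equivalently: the streaming moderate deviations bound of Theorem 2, Case (ii), equals T times the non-streaming Case (ii) constant exactly for these directions θ.) -/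
open Real Filter Set

noncomputable section

namespace SWMD

variable {X Y : Type} [Fintype X] [Fintype Y]

/-- `P` is a probability mass function on `X × Y`. -/
def IsPMF2 (P : X → Y → ℝ) : Prop :=
  (∀ x y, 0 ≤ P x y) ∧ (∑ x, ∑ y, P x y) = 1

/-- Marginal pmf of `X`. -/
def margX (P : X → Y → ℝ) (x : X) : ℝ := ∑ y, P x y

/-- Marginal pmf of `Y`. -/
def margY (P : X → Y → ℝ) (y : Y) : ℝ := ∑ x, P x y

/-- Joint entropy `H(P_XY)` (natural log, with the convention `0 log 0 = 0`,
which holds automatically since `Real.log 0 = 0`). -/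
def Hjoint (P : X → Y → ℝ) : ℝ := -∑ x, ∑ y, P x y * Real.log (P x y)

/-- Entropy of the `X`-marginal, `H(P_X)`. -/
def HmargX (P : X → Y → ℝ) : ℝ := -∑ x, margX P x * Real.log (margX P x)

/-- Entropy of the `Y`-marginal, `H(P_Y)`. -/
def HmargY (P : X → Y → ℝ) : ℝ := -∑ y, margY P y * Real.log (margY P y)

/-- Conditional entropy `H(P_{X|Y}|P_Y)`. -/
def HcondXY (P : X → Y → ℝ) : ℝ :=
  -∑ x, ∑ y, P x y * Real.log (P x y / margY P y)

/-- Conditional entropy `H(P_{Y|X}|P_X)`. -/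
def HcondYX (P : X → Y → ℝ) : ℝ :=
  -∑ x, ∑ y, P x y * Real.log (P x y / margX P x)

/-- Joint varentropy `V(P_XY)`. -/
def Vjoint (P : X → Y → ℝ) : ℝ :=
  ∑ x, ∑ y, P x y * (-Real.log (P x y) - Hjoint P) ^ 2

/-- Conditional varentropy `V(P_{X|Y}|P_Y)`. -/
def VcondXY (P : X → Y → ℝ) : ℝ :=
  ∑ x, ∑ y, P x y * (-Real.log (P x y / margY P y) - HcondXY P) ^ 2

/-- Conditional varentropy `V(P_{Y|X}|P_X)`. -/
def VcondYX (P : X → Y → ℝ) : ℝ :=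
  ∑ x, ∑ y, P x y * (-Real.log (P x y / margX P x) - HcondYX P) ^ 2

/-!
Both gaps `f γ - f 1` and `f γ - f 0` factor as `1 - γ`, resp. `γ`, times an affine function of `γ`
over a positive denominator. The condition `g1 ≤ θ2 / θ1` says exactly that the first affine factor
is nonnegative on `[0, 1]`, and `θ2 / θ1 ≤ (V_j - V_c) / (V_j + V_c)` that the second one is; the other term of `g2` is never the smaller one. If both conditions fail, the
windows of `γ` beating either endpoint overlap inside `(0, 1)`, because their ends differ by a
perfect square.
-/

/-- The paper's `f(γ)`, with `a = V_c` and `b = V_j`. -/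
def rate (a b θ1 θ2 γ : ℝ) : ℝ :=
  (θ1 + (1 - γ) * θ2) ^ 2 / (2 * (γ * a + (1 - γ) * b))

lemma sInf_image_eq_min_iff {α β : Type*} [ConditionallyCompleteLinearOrder β] {f : α → β}
    {s : Set α} {x y : α} (hx : x ∈ s) (hy : y ∈ s) (hbdd : BddBelow (f '' s)) :
    sInf (f '' s) = min (f x) (f y) ↔ ∀ z ∈ s, min (f x) (f y) ≤ f z := by
  refine ⟨fun h z hz => h ▸ csInf_le hbdd (mem_image_of_mem f hz), fun h => ?_⟩
  refine IsLeast.csInf_eq ⟨?_, forall_mem_image.2 h⟩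
  rcases min_choice (f x) (f y) with hmin | hmin <;> rw [hmin]
  exacts [mem_image_of_mem f hx, mem_image_of_mem f hy]

lemma sub_div_add_le_sqrt_div_sub_one {a b : ℝ} (ha : 0 < a) (hb : 0 < b) :
    (b - a) / (b + a) ≤ √(b / a) - 1 := by
  obtain ⟨r, hr, rfl⟩ : ∃ r, 0 ≤ r ∧ b = a * r ^ 2 :=
    ⟨√(b / a), sqrt_nonneg _, by rw [sq_sqrt (by positivity)]; field_simp⟩
  rw [show a * r ^ 2 / a = r ^ 2 by field_simp, sqrt_sq hr, div_le_iff₀ (by positivity)]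
  nlinarith [mul_nonneg (mul_nonneg ha.le hr) (sq_nonneg (r - 1))]

section rate

variable {a b θ1 θ2 γ : ℝ}

lemma rate_one : rate a b θ1 θ2 1 = θ1 ^ 2 / (2 * a) := by
  simp [rate]

lemma rate_zero : rate a b θ1 θ2 0 = (θ1 + θ2) ^ 2 / (2 * b) := by
  simp [rate]

lemma mul_add_one_sub_mul_pos (ha : 0 < a) (hb : 0 < b) (hγ : γ ∈ Icc 0 1) :
    0 < γ * a + (1 - γ) * b := by
  obtain ⟨hγ0, hγ1⟩ := hγ
  nlinarith [mul_le_mul_of_nonneg_left (min_le_left a b) hγ0,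
    mul_le_mul_of_nonneg_left (min_le_right a b) (sub_nonneg.2 hγ1), lt_min ha hb]

lemma rate_nonneg (ha : 0 < a) (hb : 0 < b) (hγ : γ ∈ Icc 0 1) : 0 ≤ rate a b θ1 θ2 γ :=
  div_nonneg (sq_nonneg _) (by linarith [mul_add_one_sub_mul_pos ha hb hγ])

lemma rate_sub_rate_one (ha : a ≠ 0) (hD : γ * a + (1 - γ) * b ≠ 0) :
    rate a b θ1 θ2 γ - θ1 ^ 2 / (2 * a) =
      (1 - γ) * (a * θ2 ^ 2 * (1 - γ) + θ1 * (2 * a * θ2 - θ1 * (b - a))) /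
        (2 * a * (γ * a + (1 - γ) * b)) := by
  unfold rate
  field_simp
  ring

lemma rate_sub_rate_zero (hb : b ≠ 0) (hD : γ * a + (1 - γ) * b ≠ 0) :
    rate a b θ1 θ2 γ - (θ1 + θ2) ^ 2 / (2 * b) =
      γ * (b * θ1 ^ 2 - a * (θ1 + θ2) ^ 2 - b * θ2 ^ 2 * (1 - γ)) /
        (2 * b * (γ * a + (1 - γ) * b)) := by
  unfold rate
  field_simp
  ring

lemma rate_one_le_rate (ha : 0 < a) (hb : 0 < b) (hθ1 : 0 < θ1)
    (hA : (b - a) * θ1 ≤ θ2 * (2 * a)) (hγ : γ ∈ Icc 0 1) :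
    θ1 ^ 2 / (2 * a) ≤ rate a b θ1 θ2 γ := by
  have hD := mul_add_one_sub_mul_pos ha hb hγ
  rw [← sub_nonneg, rate_sub_rate_one ha.ne' hD.ne']
  have hγ1 : 0 ≤ 1 - γ := sub_nonneg.2 hγ.2
  exact div_nonneg (mul_nonneg hγ1 (add_nonneg (by positivity)
    (mul_nonneg hθ1.le (by linarith)))) (by positivity)

lemma rate_zero_le_rate (ha : 0 < a) (hb : 0 < b) (hθ : 0 < θ1 + θ2)
    (hB : θ2 * (b + a) ≤ (b - a) * θ1) (hγ : γ ∈ Icc 0 1) :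
    (θ1 + θ2) ^ 2 / (2 * b) ≤ rate a b θ1 θ2 γ := by
  have hD := mul_add_one_sub_mul_pos ha hb hγ
  rw [← sub_nonneg, rate_sub_rate_zero hb.ne' hD.ne']
  -- the numerator's second factor is `(θ1 + θ2) * ((b - a) * θ1 - θ2 * (b + a)) + b * θ2 ^ 2 * γ`
  have hq : 0 ≤ b * θ1 ^ 2 - a * (θ1 + θ2) ^ 2 - b * θ2 ^ 2 * (1 - γ) := by
    nlinarith [mul_nonneg hθ.le (sub_nonneg.2 hB), mul_nonneg (mul_nonneg hb.le (sq_nonneg θ2)) hγ.1]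
  exact div_nonneg (mul_nonneg hγ.1 hq) (by positivity)

lemma exists_rate_lt_min (ha : 0 < a) (hb : 0 < b) (hθ1 : 0 < θ1) (hθ : 0 < θ1 + θ2)
    (hA : θ2 * (2 * a) < (b - a) * θ1) (hB : (b - a) * θ1 < θ2 * (b + a)) :
    ∃ γ ∈ Icc (0 : ℝ) 1, rate a b θ1 θ2 γ < min (θ1 ^ 2 / (2 * a)) ((θ1 + θ2) ^ 2 / (2 * b)) := by
  have hθ2 : 0 < θ2 ^ 2 := by
    refine sq_pos_of_ne_zero fun h => ?_
    subst h
    nlinarith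
  have hC : θ1 * (2 * a * θ2 - θ1 * (b - a)) < 0 := mul_neg_of_pos_of_neg hθ1 (by linarith)
  have hE : b * θ1 ^ 2 - a * (θ1 + θ2) ^ 2 < b * θ2 ^ 2 := by
    nlinarith [mul_pos hθ (sub_pos.2 hB)]
  have hsq : 0 < ((b - a) * θ1 - a * θ2) ^ 2 := by
    refine sq_pos_of_ne_zero fun h => ?_
    nlinarith
  -- `γ = 1 - t` beats `rate 1` iff `t < t0` and beats `rate 0` iff `t1 < t`, and
  -- `t0 - t1 = ((b - a) θ1 - a θ2)² / (a b θ2²)`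
  set t0 := -(θ1 * (2 * a * θ2 - θ1 * (b - a))) / (a * θ2 ^ 2)
  set t1 := (b * θ1 ^ 2 - a * (θ1 + θ2) ^ 2) / (b * θ2 ^ 2)
  have ht0 : 0 < t0 := div_pos (neg_pos.2 hC) (by positivity)
  have ht1 : t1 < 1 := (div_lt_one (by positivity)).2 hE
  have ht10 : t1 < t0 := by
    rw [div_lt_div_iff₀ (by positivity) (by positivity)]
    nlinarith [mul_pos hθ2 hsq]
  obtain ⟨t, hlo, hhi⟩ := exists_between (max_lt (lt_min ht10 ht1) (lt_min ht0 one_pos))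
  obtain ⟨htt1, ht⟩ := max_lt_iff.1 hlo
  obtain ⟨htt0, ht'⟩ := lt_min_iff.1 hhi
  have hγ : 1 - t ∈ Icc (0 : ℝ) 1 := ⟨by linarith, by linarith⟩
  have hD := mul_add_one_sub_mul_pos ha hb hγ
  refine ⟨1 - t, hγ, lt_min ?_ ?_⟩
  · rw [← sub_neg, rate_sub_rate_one ha.ne' hD.ne', sub_sub_cancel]
    rw [lt_div_iff₀ (by positivity)] at htt0
    exact div_neg_of_neg_of_pos (mul_neg_of_pos_of_neg ht (by linarith)) (by positivity)
  · rw [← sub_neg, rate_sub_rate_zero hb.ne' hD.ne', sub_sub_cancel]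
    rw [div_lt_iff₀ (by positivity)] at htt1
    exact div_neg_of_neg_of_pos (mul_neg_of_pos_of_neg (by linarith) (by linarith))
      (by positivity)

lemma sInf_rate_eq_min_iff (ha : 0 < a) (hb : 0 < b) (hθ1 : 0 < θ1) (hθ : 0 < θ1 + θ2) :
    sInf (rate a b θ1 θ2 '' Icc 0 1) = min (θ1 ^ 2 / (2 * a)) ((θ1 + θ2) ^ 2 / (2 * b)) ↔
      (b - a) * θ1 ≤ θ2 * (2 * a) ∨ θ2 * (b + a) ≤ (b - a) * θ1 := by
  have hbdd : BddBelow (rate a b θ1 θ2 '' Icc 0 1) :=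
    ⟨0, forall_mem_image.2 fun _ hγ => rate_nonneg ha hb hγ⟩
  rw [← rate_one, ← rate_zero, sInf_image_eq_min_iff (right_mem_Icc.2 zero_le_one)
    (left_mem_Icc.2 zero_le_one) hbdd, rate_one, rate_zero]
  constructor
  · intro h
    by_contra! hc
    obtain ⟨γ, hγ, hlt⟩ := exists_rate_lt_min ha hb hθ1 hθ hc.1 hc.2
    exact (h γ hγ).not_gt hlt
  · rintro (hA | hB) γ hγ
    · exact (min_le_left _ _).trans (rate_one_le_rate ha hb hθ1 hA hγ)
    · exact (min_le_right _ _).trans (rate_zero_le_rate ha hb hθ hB hγ)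

end rate

theorem gain_T_iff_general
    (P : X → Y → ℝ)
    (hVc : 0 < VcondXY P) (hVj : 0 < Vjoint P)
    (θ1 θ2 : ℝ) (hθ1 : 0 < θ1) (hθ2 : -θ1 < θ2) :
    (sInf ((fun γ : ℝ => (θ1 + (1 - γ) * θ2) ^ 2 /
          (2 * (γ * VcondXY P + (1 - γ) * Vjoint P))) '' Set.Icc 0 1)
        = min (θ1 ^ 2 / (2 * VcondXY P)) ((θ1 + θ2) ^ 2 / (2 * Vjoint P)))
      ↔ ((Vjoint P - VcondXY P) / (2 * VcondXY P) ≤ θ2 / θ1 ∨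
          θ2 / θ1 ≤ min (Real.sqrt (Vjoint P / VcondXY P) - 1)
            ((Vjoint P - VcondXY P) / (Vjoint P + VcondXY P))) := by
  rw [min_eq_right (sub_div_add_le_sqrt_div_sub_one hVc hVj),
    div_le_div_iff₀ (by positivity) hθ1, div_le_div_iff₀ hθ1 (by positivity)]
  exact sInf_rate_eq_min_iff hVc hVj hθ1 (by linarith)

/-- **Proposition 1** (conditions for obtaining a multiplicative gain of `T`):
with `V_c = V(P_{X|Y}|P_Y) > 0`, `V_j = V(P_XY) > 0`, `θ1 > 0`, `θ2 > -θ1`, and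
`f(γ) = (θ1+(1−γ)θ2)²/(2(γ V_c+(1−γ)V_j))`, the equality
`inf_{γ∈[0,1]} f(γ) = min{θ1²/(2V_c), (θ1+θ2)²/(2V_j)}` holds if and only if
`θ2/θ1 ≥ g1 = (V_j−V_c)/(2V_c)` or
`θ2/θ1 ≤ g2 = min{√(V_j/V_c)−1, (V_j−V_c)/(V_j+V_c)}`. -/
theorem gain_T_iff [Nonempty X] [Nonempty Y]
    (P : X → Y → ℝ) (hP : IsPMF2 P)
    (hVc : 0 < VcondXY P) (hVj : 0 < Vjoint P)
    (θ1 θ2 : ℝ) (hθ1 : 0 < θ1) (hθ2 : -θ1 < θ2) :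
    (sInf ((fun γ : ℝ => (θ1 + (1 - γ) * θ2) ^ 2 /
          (2 * (γ * VcondXY P + (1 - γ) * Vjoint P))) '' Set.Icc 0 1)
        = min (θ1 ^ 2 / (2 * VcondXY P)) ((θ1 + θ2) ^ 2 / (2 * Vjoint P)))
      ↔ ((Vjoint P - VcondXY P) / (2 * VcondXY P) ≤ θ2 / θ1 ∨
          θ2 / θ1 ≤ min (Real.sqrt (Vjoint P / VcondXY P) - 1)
            ((Vjoint P - VcondXY P) / (Vjoint P + VcondXY P))) :=
  gain_T_iff_general P hVc hVj θ1 θ2 hθ1 hθ2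

end SWMD
end
end

section
/- Define E_XY : [0,1] → ℝ by E_XY(ρ) = (1+ρ) log Σ_{(x,y): P_XY(x,y)>0} P_XY(x,y)^{1/(1+ρ)}. Then E_XY is three times differentiable on [0,1] and satisfies: (a) E_XY′(0) = H(P_XY); (b) E_XY″(0) = V(P_XY); (c) E_XY″(ρ) ≥ 0 for all ρ ∈ [0,1]; and (d) there exists a finite constant M_XY > 0 such that |E_XY‴(ρ)| ≤ M_XY for all ρ ∈ [0,1]. -/
open Real Filter Set

noncomputable section

namespace SWMD

variable {X Y : Type} [Fintype X] [Fintype Y]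

open scoped Classical

/-- The Gallager-type function
`E_XY(ρ) = (1+ρ) log Σ_{(x,y): P(x,y)>0} P(x,y)^{1/(1+ρ)}`. -/
def Exy (P : X → Y → ℝ) (ρ : ℝ) : ℝ :=
  (1 + ρ) * Real.log (∑ x, ∑ y, if 0 < P x y then P x y ^ ((1 : ℝ) / (1 + ρ)) else 0)

/-!
With `ℓ = log P` on the support of `P`, the sum inside `E_XY` is the partition function
`Z(β) = Σ exp (β ℓ)` at `β = 1/(1+ρ)`, so `E_XY` is the perspective `(1+ρ) Λ(1/(1+ρ))` of the
smooth log-partition function `Λ = log Z`. Differentiating the perspective gives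
`E_XY′ = Λ(β) - β Λ′(β)` and `E_XY″ = β³ Λ″(β)`, while `Λ′` and `Λ″` are the mean and the
variance of `ℓ` under the tilted weights `exp (β ℓ) / Z(β)`. At `β = 1` these weights are `P`
itself, which gives `H` and `V`; a variance is nonnegative, and `E_XY‴` is continuous on the
compact interval `[0,1]`.
-/

section LogPartition

variable {ι : Type*} (s : Finset ι) (ℓ : ι → ℝ)

def tiltedMoment (k : ℕ) (β : ℝ) : ℝ := ∑ i ∈ s, ℓ i ^ k * exp (ℓ i * β)

def logPartition (β : ℝ) : ℝ := log (tiltedMoment s ℓ 0 β)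

theorem hasDerivAt_tiltedMoment (k : ℕ) (β : ℝ) :
    HasDerivAt (tiltedMoment s ℓ k) (tiltedMoment s ℓ (k + 1) β) β := by
  unfold tiltedMoment
  exact HasDerivAt.fun_sum fun i _ =>
    ((((hasDerivAt_id' β).const_mul (ℓ i)).exp).const_mul (ℓ i ^ k)).congr_deriv (by ring)

theorem contDiff_tiltedMoment {n : WithTop ℕ∞} (k : ℕ) : ContDiff ℝ n (tiltedMoment s ℓ k) :=
  ContDiff.sum fun _ _ => contDiff_const.mul (contDiff_const.mul contDiff_id).exp

variable {s}

theorem tiltedMoment_zero_pos (hs : s.Nonempty) (β : ℝ) : 0 < tiltedMoment s ℓ 0 β :=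
  Finset.sum_pos (fun _ _ => by simp only [pow_zero, one_mul]; positivity) hs

theorem contDiff_logPartition {n : WithTop ℕ∞} (hs : s.Nonempty) :
    ContDiff ℝ n (logPartition s ℓ) :=
  (contDiff_tiltedMoment s ℓ 0).log fun β => (tiltedMoment_zero_pos ℓ hs β).ne'

theorem hasDerivAt_logPartition (hs : s.Nonempty) (β : ℝ) :
    HasDerivAt (logPartition s ℓ) (tiltedMoment s ℓ 1 β / tiltedMoment s ℓ 0 β) β :=
  (hasDerivAt_tiltedMoment s ℓ 0 β).log (tiltedMoment_zero_pos ℓ hs β).ne'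

theorem sq_tiltedMoment_one_le (β : ℝ) :
    tiltedMoment s ℓ 1 β ^ 2 ≤ tiltedMoment s ℓ 2 β * tiltedMoment s ℓ 0 β := by
  simp only [tiltedMoment, pow_one, pow_zero, one_mul]
  exact Finset.sum_sq_le_sum_mul_sum_of_sq_le_mul s (fun _ _ => by positivity)
    (fun _ _ => by positivity) fun i _ => le_of_eq (by ring)

theorem deriv_deriv_logPartition (hs : s.Nonempty) (β : ℝ) :
    deriv (deriv (logPartition s ℓ)) β =
      (tiltedMoment s ℓ 2 β * tiltedMoment s ℓ 0 β - tiltedMoment s ℓ 1 β ^ 2) /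
        tiltedMoment s ℓ 0 β ^ 2 := by
  have hZ := fun β => (tiltedMoment_zero_pos ℓ hs β).ne'
  rw [funext fun β => (hasDerivAt_logPartition ℓ hs β).deriv,
    ((hasDerivAt_tiltedMoment s ℓ 1 β).fun_div (hasDerivAt_tiltedMoment s ℓ 0 β) (hZ β)).deriv]
  ring

theorem deriv_deriv_logPartition_nonneg (hs : s.Nonempty) (β : ℝ) :
    0 ≤ deriv (deriv (logPartition s ℓ)) β := by
  rw [deriv_deriv_logPartition ℓ hs]
  exact div_nonneg (sub_nonneg.2 (sq_tiltedMoment_one_le ℓ β)) (sq_nonneg _)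

end LogPartition

section Perspective

/-- The perspective `t Λ(1/t)` of `Λ`, as a function of `ρ = t - 1`. -/
def perspective (Λ : ℝ → ℝ) (ρ : ℝ) : ℝ := (1 + ρ) * Λ (1 + ρ)⁻¹

variable {Λ : ℝ → ℝ} {ρ : ℝ}

theorem hasDerivAt_inv_one_add (hρ : -1 < ρ) :
    HasDerivAt (fun ρ : ℝ => (1 + ρ)⁻¹) (-((1 + ρ)⁻¹) ^ 2) ρ :=
  (((hasDerivAt_id' ρ).const_add 1).inv (by linarith)).congr_deriv (by field_simp)

theorem contDiffOn_perspective {n : WithTop ℕ∞} (hΛ : ContDiff ℝ n Λ) :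
    ContDiffOn ℝ n (perspective Λ) (Ioi (-1)) := by
  have h1 : ContDiff ℝ n fun ρ : ℝ => 1 + ρ := contDiff_const.add contDiff_id
  exact h1.contDiffOn.mul <| hΛ.comp_contDiffOn <|
    h1.contDiffOn.inv fun ρ (hρ : -1 < ρ) => by linarith

theorem hasDerivAt_perspective {d : ℝ} (hΛ : HasDerivAt Λ d (1 + ρ)⁻¹) (hρ : -1 < ρ) :
    HasDerivAt (perspective Λ) (Λ (1 + ρ)⁻¹ - (1 + ρ)⁻¹ * d) ρ := by
  have h := ((hasDerivAt_id' ρ).const_add 1).mul (hΛ.comp ρ (hasDerivAt_inv_one_add hρ))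
  refine h.congr_deriv ?_
  simp only [Function.comp_apply]
  field_simp
  ring

theorem deriv_perspective (hΛ : Differentiable ℝ Λ) (hρ : -1 < ρ) :
    deriv (perspective Λ) ρ = Λ (1 + ρ)⁻¹ - (1 + ρ)⁻¹ * deriv Λ (1 + ρ)⁻¹ :=
  (hasDerivAt_perspective (hΛ _).hasDerivAt hρ).deriv

theorem deriv_deriv_perspective (hΛ : ContDiff ℝ 2 Λ) (hρ : -1 < ρ) :
    deriv (deriv (perspective Λ)) ρ = ((1 + ρ)⁻¹) ^ 3 * deriv (deriv Λ) (1 + ρ)⁻¹ := by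
  have hd : Differentiable ℝ Λ := hΛ.differentiable two_ne_zero
  have hd' : Differentiable ℝ (deriv Λ) := (ContDiff.deriv' (n := 1) hΛ).differentiable one_ne_zero
  have heq : deriv (perspective Λ) =ᶠ[nhds ρ]
      fun ρ => Λ (1 + ρ)⁻¹ - (1 + ρ)⁻¹ * deriv Λ (1 + ρ)⁻¹ :=
    eventually_of_mem (Ioi_mem_nhds hρ) fun _ h => deriv_perspective hd h
  have hinv := hasDerivAt_inv_one_add hρ
  have h := ((hd _).hasDerivAt.comp ρ hinv).sub
    (hinv.mul ((hd' _).hasDerivAt.comp ρ hinv))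
  rw [heq.deriv_eq]
  refine h.deriv.trans ?_
  simp only [Function.comp_apply]
  ring

end Perspective

theorem exists_pos_bound_deriv_deriv_deriv_of_contDiffOn {f : ℝ → ℝ} {U K : Set ℝ}
    (hK : IsCompact K) (hU : IsOpen U) (hKU : K ⊆ U) (hf : ContDiffOn ℝ 3 f U) :
    ∃ M, 0 < M ∧ ∀ x ∈ K, |deriv (deriv (deriv f)) x| ≤ M := by
  have h3 : ContinuousOn (deriv (deriv (deriv f))) U :=
    ((hf.deriv_of_isOpen hU (m := 2) le_rfl).deriv_of_isOpen hU (m := 1) le_rfl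
      ).continuousOn_deriv_of_isOpen hU le_rfl
  obtain ⟨C, hC⟩ := hK.exists_bound_of_continuousOn (h3.mono hKU)
  exact ⟨max C 1, lt_max_of_lt_right one_pos, fun x hx => (hC x hx).trans (le_max_left _ _)⟩

section Joint

variable (P : X → Y → ℝ)

def jointSupport : Finset (X × Y) := Finset.univ.filter fun q => 0 < P q.1 q.2

theorem Exy_eq_perspective :
    Exy P = perspective (logPartition (jointSupport P) fun q => log (P q.1 q.2)) := by
  funext ρ
  simp only [Exy, perspective, logPartition, tiltedMoment, jointSupport, Finset.sum_filter,
    pow_zero, one_mul, ← Fintype.sum_prod_type']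
  congr 2
  refine Finset.sum_congr rfl fun q _ => ?_
  split_ifs with h
  · rw [rpow_def_of_pos h, one_div]
  · rfl

theorem jointSupport_nonempty {P : X → Y → ℝ} (hP : IsPMF2 P) : (jointSupport P).Nonempty := by
  obtain ⟨x, -, hx⟩ := Finset.exists_ne_zero_of_sum_ne_zero (hP.2.symm ▸ one_ne_zero)
  obtain ⟨y, -, hy⟩ := Finset.exists_ne_zero_of_sum_ne_zero hx
  exact ⟨(x, y), by simp [jointSupport, (hP.1 x y).lt_of_ne' hy]⟩

theorem tiltedMoment_jointSupport_one {P : X → Y → ℝ} (hP : ∀ x y, 0 ≤ P x y) (k : ℕ) :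
    tiltedMoment (jointSupport P) (fun q => log (P q.1 q.2)) k 1 =
      ∑ x, ∑ y, P x y * log (P x y) ^ k := by
  rw [tiltedMoment, jointSupport, Finset.sum_filter, ← Fintype.sum_prod_type']
  refine Fintype.sum_congr _ _ fun q => ?_
  split_ifs with h
  · rw [mul_one, exp_log h, mul_comm]
  · simp [le_antisymm (not_lt.1 h) (hP _ _)]

theorem Vjoint_eq {P : X → Y → ℝ} (hP : IsPMF2 P) :
    Vjoint P = ∑ x, ∑ y, P x y * log (P x y) ^ 2 - Hjoint P ^ 2 := by
  have hH : ∑ x, ∑ y, P x y * log (P x y) = -Hjoint P := by simp [Hjoint]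
  calc Vjoint P
      = ∑ x, ∑ y, (P x y * log (P x y) ^ 2 + 2 * Hjoint P * (P x y * log (P x y)) +
          Hjoint P ^ 2 * P x y) := by
        unfold Vjoint
        exact Fintype.sum_congr _ _ fun x => Fintype.sum_congr _ _ fun y => by ring
    _ = ∑ x, ∑ y, P x y * log (P x y) ^ 2 + 2 * Hjoint P * -Hjoint P + Hjoint P ^ 2 * 1 := by
        simp only [Finset.sum_add_distrib, ← Finset.mul_sum, hH, hP.2]
    _ = _ := by ring

end Joint

theorem Exy_derivatives_general
    (P : X → Y → ℝ) (hP : IsPMF2 P) :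
    (∀ ρ ∈ Set.Icc (0:ℝ) 1, ContDiffAt ℝ 3 (Exy P) ρ) ∧
    deriv (Exy P) 0 = Hjoint P ∧
    deriv (deriv (Exy P)) 0 = Vjoint P ∧
    (∀ ρ ∈ Set.Icc (0:ℝ) 1, 0 ≤ deriv (deriv (Exy P)) ρ) ∧
    (∃ M : ℝ, 0 < M ∧ ∀ ρ ∈ Set.Icc (0:ℝ) 1,
      |deriv (deriv (deriv (Exy P))) ρ| ≤ M) := by
  have hM := tiltedMoment_jointSupport_one hP.1
  set ℓ : X × Y → ℝ := fun q => log (P q.1 q.2)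
  have hs := jointSupport_nonempty hP
  have hΛ : ContDiff ℝ 3 (logPartition (jointSupport P) ℓ) := contDiff_logPartition ℓ hs
  have hE : ContDiffOn ℝ 3 (Exy P) (Ioi (-1)) := Exy_eq_perspective P ▸ contDiffOn_perspective hΛ
  have hIcc : Icc (0 : ℝ) 1 ⊆ Ioi (-1) := (Icc_subset_Ioi_iff zero_le_one).2 (by norm_num)
  refine ⟨fun ρ hρ => hE.contDiffAt (Ioi_mem_nhds (hIcc hρ)), ?_, ?_, fun ρ hρ => ?_,
    exists_pos_bound_deriv_deriv_deriv_of_contDiffOn isCompact_Icc isOpen_Ioi hIcc hE⟩ <;>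
    rw [Exy_eq_perspective]
  · rw [deriv_perspective (hΛ.differentiable three_ne_zero) (by norm_num),
      (hasDerivAt_logPartition ℓ hs _).deriv]
    simp [logPartition, hM, hP.2, Hjoint]
  · rw [deriv_deriv_perspective (hΛ.of_le (by norm_num)) (by norm_num),
      deriv_deriv_logPartition ℓ hs]
    simp [hM, hP.2, Vjoint_eq hP, Hjoint]
  · rw [deriv_deriv_perspective (hΛ.of_le (by norm_num)) (hIcc hρ)]
    exact mul_nonneg (by have := hρ.1; positivity) (deriv_deriv_logPartition_nonneg ℓ hs _)

/-- **Lemma 1**: `E_XY` is three times differentiable on `[0,1]` (derivatives at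
the endpoints being one-sided, i.e. taken for the globally defined function
given by the same formula), with `E_XY′(0) = H(P_XY)`, `E_XY″(0) = V(P_XY)`,
`E_XY″ ≥ 0` on `[0,1]`, and a finite positive bound `M_XY` on `|E_XY‴|` over
`[0,1]`. -/
theorem Exy_derivatives [Nonempty X] [Nonempty Y]
    (P : X → Y → ℝ) (hP : IsPMF2 P) :
    (∀ ρ ∈ Set.Icc (0:ℝ) 1, ContDiffAt ℝ 3 (Exy P) ρ) ∧
    deriv (Exy P) 0 = Hjoint P ∧
    deriv (deriv (Exy P)) 0 = Vjoint P ∧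
    (∀ ρ ∈ Set.Icc (0:ℝ) 1, 0 ≤ deriv (deriv (Exy P)) ρ) ∧
    (∃ M : ℝ, 0 < M ∧ ∀ ρ ∈ Set.Icc (0:ℝ) 1,
      |deriv (deriv (deriv (Exy P))) ρ| ≤ M) :=
  Exy_derivatives_general P hP

end SWMD
end
end

section
/- Let m ∈ ℕ and let f, g, g_1, …, g_m : [0,1] → ℝ be continuous functions. Let {a_n}, {b_n}, {c_{1,n}}, …, {c_{m,n}} be sequences of positive reals with b_n/a_n → 0 and c_{i,n}/b_n → 0 for each i ∈ {1,…,m}. Define f* = inf_{γ∈[0,1]} f(γ) and g* = inf{ g(γ) : γ ∈ [0,1], f(γ) = f* } (the set {γ ∈ [0,1] : f(γ) = f*} is nonempty by compactness and continuity). Then inf_{γ∈[0,1]} ( a_n f(γ) + b_n g(γ) + Σ_{i=1}^m c_{i,n} g_i(γ) ) = a_n f* + b_n g* + o(b_n), i.e., ( inf_{γ∈[0,1]} ( a_n f(γ) + b_n g(γ) + Σ_{i=1}^m c_{i,n} g_i(γ) ) − a_n f* − b_n g* ) / b_n → 0 as n → ∞. -/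
open Filter Set Topology

/-!
Let `γ★` minimise `g` among the minimisers of `f`; evaluating at `γ★` bounds the infimum
above by `a_n f* + b_n g* + o(b_n)`. For the lower bound fix `ε > 0`. By compactness, `f`
exceeds `f*` by a fixed `δ > 0` wherever `g ≤ g* - ε`; there the gain `a_n δ` beats any loss
in `b_n g`, because `b_n / a_n → 0`, and elsewhere `a_n f + b_n g ≥ a_n f* + b_n (g* - ε)`
trivially. The terms `c_{i,n} g_i` are uniformly `o(b_n)` on `[0,1]`.
-/

section TwoScale

variable {X : Type*} {s : Set X} {f g : X → ℝ}

def minimizers (f : X → ℝ) (s : Set X) : Set X :=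
  {γ | γ ∈ s ∧ f γ = sInf (f '' s)}

theorem minimizers_subset : minimizers f s ⊆ s := fun _ hγ => hγ.1

theorem minimizers_eq_inter_preimage_Iic (hf : BddBelow (f '' s)) :
    minimizers f s = s ∩ f ⁻¹' Iic (sInf (f '' s)) := by
  ext γ
  refine ⟨fun hγ => ⟨hγ.1, hγ.2.le⟩, fun hγ => ⟨hγ.1, ?_⟩⟩
  exact le_antisymm hγ.2 (csInf_le hf (mem_image_of_mem f hγ.1))

variable [TopologicalSpace X]

theorem isCompact_minimizers (hs : IsCompact s) (hf : ContinuousOn f s) :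
    IsCompact (minimizers f s) := by
  rw [minimizers_eq_inter_preimage_Iic (hs.bddBelow_image hf)]
  exact hf.lowerSemicontinuousOn.isCompact_inter_preimage_Iic hs _

theorem IsCompact.minimizers_nonempty (hs : IsCompact s) (hne : s.Nonempty)
    (hf : ContinuousOn f s) : (minimizers f s).Nonempty := by
  obtain ⟨γ, hγ, hfγ⟩ := hs.exists_sInf_image_eq hne hf
  exact ⟨γ, hγ, hfγ.symm⟩

theorem IsCompact.exists_pos_add_le_of_le_of_lt_sInf_minimizers (hs : IsCompact s)
    (hf : ContinuousOn f s) (hg : ContinuousOn g s) {t : ℝ}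
    (ht : t < sInf (g '' minimizers f s)) :
    ∃ δ > 0, ∀ γ ∈ s, g γ ≤ t → sInf (f '' s) + δ ≤ f γ := by
  rcases (s ∩ g ⁻¹' Iic t).eq_empty_or_nonempty with hS | hS
  · exact ⟨1, one_pos, fun γ hγ hgγ =>
      (eq_empty_iff_forall_notMem.1 hS γ ⟨hγ, hgγ⟩).elim⟩
  have hSs : s ∩ g ⁻¹' Iic t ⊆ s := inter_subset_left
  obtain ⟨γ₀, ⟨hγ₀, hgγ₀⟩, hfγ₀⟩ :=
    (hg.lowerSemicontinuousOn.isCompact_inter_preimage_Iic hs t).exists_sInf_image_eq hS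
      (hf.mono hSs)
  have hγ₀_not_min : γ₀ ∉ minimizers f s := fun hmin =>
    ht.not_ge <| (csInf_le ((hs.bddBelow_image hg).mono (image_mono minimizers_subset))
      (mem_image_of_mem g hmin)).trans hgγ₀
  have hfs_lt : sInf (f '' s) < f γ₀ :=
    (csInf_le (hs.bddBelow_image hf) (mem_image_of_mem f hγ₀)).lt_of_ne
      fun h => hγ₀_not_min ⟨hγ₀, h.symm⟩
  refine ⟨f γ₀ - sInf (f '' s), sub_pos.2 hfs_lt, fun γ hγ hgγ => ?_⟩
  have := hfγ₀ ▸ csInf_le ((hs.bddBelow_image hf).mono (image_mono hSs))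
    (mem_image_of_mem f ⟨hγ, hgγ⟩)
  linarith

variable {ι : Type*} {l : Filter ι} {a b : ι → ℝ}

theorem IsCompact.eventually_le_add_mul_of_lt_sInf_minimizers (hs : IsCompact s)
    (hf : ContinuousOn f s) (hg : ContinuousOn g s) (ha : ∀ n, 0 < a n) (hb : ∀ n, 0 ≤ b n)
    (hba : Tendsto (fun n => b n / a n) l (𝓝 0)) {t : ℝ}
    (ht : t < sInf (g '' minimizers f s)) :
    ∀ᶠ n in l, ∀ γ ∈ s, a n * sInf (f '' s) + b n * t ≤ a n * f γ + b n * g γ := by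
  obtain ⟨δ, hδ, hgap⟩ := hs.exists_pos_add_le_of_le_of_lt_sInf_minimizers hf hg ht
  obtain ⟨L, hL⟩ := hs.bddBelow_image hg
  have hLt : 0 < t - min L (t - 1) := by linarith [min_le_right L (t - 1)]
  filter_upwards [hba.eventually (gt_mem_nhds (div_pos hδ hLt))] with n hn γ hγ
  have hgL : min L (t - 1) ≤ g γ := (min_le_left _ _).trans (hL (mem_image_of_mem g hγ))
  have hfs : sInf (f '' s) ≤ f γ := csInf_le (hs.bddBelow_image hf) (mem_image_of_mem f hγ)
  have hloss := (div_lt_div_iff₀ (ha n) hLt).1 hn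
  by_cases hgt : g γ ≤ t
  · nlinarith [hgap γ hγ hgt, ha n, hb n]
  · nlinarith [ha n, hb n]

theorem IsCompact.tendsto_sInf_add_mul_add_sub_div (hs : IsCompact s) (hne : s.Nonempty)
    (hf : ContinuousOn f s) (hg : ContinuousOn g s) (ha : ∀ n, 0 < a n) (hb : ∀ n, 0 < b n)
    (hba : Tendsto (fun n => b n / a n) l (𝓝 0)) (h : ι → X → ℝ) {M : ι → ℝ}
    (hhM : ∀ n, ∀ γ ∈ s, |h n γ| ≤ M n) (hM : Tendsto (fun n => M n / b n) l (𝓝 0)) :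
    Tendsto (fun n =>
      (sInf ((fun γ => a n * f γ + b n * g γ + h n γ) '' s) - a n * sInf (f '' s)
        - b n * sInf (g '' minimizers f s)) / b n) l (𝓝 0) := by
  obtain ⟨γ₀, hγ₀, hgγ₀⟩ :=
    (isCompact_minimizers hs hf).exists_sInf_image_eq (hs.minimizers_nonempty hne hf)
      (hg.mono minimizers_subset)
  refine Metric.tendsto_nhds.2 fun ε hε => ?_
  filter_upwards [hs.eventually_le_add_mul_of_lt_sInf_minimizers hf hg ha (fun n => (hb n).le)
      hba (sub_lt_self _ (half_pos hε)), hM.eventually (gt_mem_nhds (half_pos hε))]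
    with n hlow hMn
  set F := fun γ => a n * f γ + b n * g γ + h n γ
  have hF_ge : ∀ γ ∈ s, a n * sInf (f '' s) + b n * (sInf (g '' minimizers f s) - ε / 2) - M n
      ≤ F γ := fun γ hγ => by linarith [hlow γ hγ, (abs_le.1 (hhM n γ hγ)).1]
  have hupper : sInf (F '' s) ≤ F γ₀ :=
    csInf_le ⟨_, forall_mem_image.2 hF_ge⟩ (mem_image_of_mem F (minimizers_subset hγ₀))
  have hlower := le_csInf (hne.image F) (forall_mem_image.2 hF_ge)
  have hFγ₀ : F γ₀ ≤ a n * sInf (f '' s) + b n * sInf (g '' minimizers f s) + M n := by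
    simp only [F, hγ₀.2, hgγ₀, add_le_add_iff_left]
    exact (abs_le.1 (hhM n γ₀ (minimizers_subset hγ₀))).2
  have hMb := (div_lt_iff₀ (hb n)).1 hMn
  rw [Real.dist_eq, sub_zero, abs_div, abs_of_pos (hb n), div_lt_iff₀ (hb n), abs_lt]
  constructor <;> linarith

end TwoScale

theorem tendsto_sum_abs_mul_div {κ ι : Type*} [Fintype κ] {l : Filter ι} {c : κ → ι → ℝ}
    {b : ι → ℝ} (B : κ → ℝ) (hb : ∀ n, 0 < b n)
    (hcb : ∀ i, Tendsto (fun n => c i n / b n) l (𝓝 0)) :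
    Tendsto (fun n => (∑ i, |c i n| * B i) / b n) l (𝓝 0) := by
  have : Tendsto (fun n => ∑ i, |c i n / b n| * B i) l (𝓝 0) := by
    simpa using tendsto_finsetSum Finset.univ fun i _ => (hcb i).abs.mul_const (B i)
  refine this.congr fun n => ?_
  rw [Finset.sum_div]
  refine Finset.sum_congr rfl fun i _ => ?_
  rw [abs_div, abs_of_pos (hb n)]
  ring

theorem inf_asymptotic_expansion_general (m : ℕ) (f g : ℝ → ℝ) (G : Fin m → ℝ → ℝ)
    (hf : ContinuousOn f (Set.Icc 0 1)) (hg : ContinuousOn g (Set.Icc 0 1))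
    (hG : ∀ i, ContinuousOn (G i) (Set.Icc 0 1))
    (a b : ℕ → ℝ) (c : Fin m → ℕ → ℝ)
    (ha : ∀ n, 0 < a n) (hb : ∀ n, 0 < b n)
    (hba : Tendsto (fun n => b n / a n) atTop (nhds 0))
    (hcb : ∀ i, Tendsto (fun n => c i n / b n) atTop (nhds 0)) :
    Tendsto (fun n =>
      (sInf ((fun γ => a n * f γ + b n * g γ + ∑ i, c i n * G i γ) '' Set.Icc 0 1)
        - a n * sInf (f '' Set.Icc 0 1)
        - b n * sInf (g '' {γ | γ ∈ Set.Icc (0:ℝ) 1 ∧ f γ = sInf (f '' Set.Icc 0 1)}))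
        / b n) atTop (nhds 0) := by
  choose B hB using fun i => isCompact_Icc.exists_bound_of_continuousOn (hG i)
  refine isCompact_Icc.tendsto_sInf_add_mul_add_sub_div (nonempty_Icc.2 zero_le_one) hf hg ha hb
    hba (fun n γ => ∑ i, c i n * G i γ) (fun n γ hγ => ?_) (tendsto_sum_abs_mul_div B hb hcb)
  calc |∑ i, c i n * G i γ| ≤ ∑ i, |c i n * G i γ| := Finset.abs_sum_le_sum_abs _ _
    _ ≤ ∑ i, |c i n| * B i := Finset.sum_le_sum fun i _ => by
      rw [abs_mul]
      exact mul_le_mul_of_nonneg_left (hB i γ hγ) (abs_nonneg _)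

/-- **Lemma 4** (a Polyanskiy-type asymptotic expansion of a parametric
infimum): for continuous `f, g, g₁, …, g_m` on `[0,1]` and positive sequences
`a_n, b_n, c_{i,n}` with `b_n/a_n → 0` and `c_{i,n}/b_n → 0`, one has
`inf_{γ∈[0,1]} (a_n f(γ) + b_n g(γ) + Σ_i c_{i,n} g_i(γ)) = a_n f* + b_n g* + o(b_n)`,
where `f* = inf_{[0,1]} f` and `g* = inf{g(γ) : γ ∈ [0,1], f(γ) = f*}`. -/
theorem inf_asymptotic_expansion (m : ℕ) (f g : ℝ → ℝ) (G : Fin m → ℝ → ℝ)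
    (hf : ContinuousOn f (Set.Icc 0 1)) (hg : ContinuousOn g (Set.Icc 0 1))
    (hG : ∀ i, ContinuousOn (G i) (Set.Icc 0 1))
    (a b : ℕ → ℝ) (c : Fin m → ℕ → ℝ)
    (ha : ∀ n, 0 < a n) (hb : ∀ n, 0 < b n) (hc : ∀ i n, 0 < c i n)
    (hba : Tendsto (fun n => b n / a n) atTop (nhds 0))
    (hcb : ∀ i, Tendsto (fun n => c i n / b n) atTop (nhds 0)) :
    Tendsto (fun n =>
      (sInf ((fun γ => a n * f γ + b n * g γ + ∑ i, c i n * G i γ) '' Set.Icc 0 1)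
        - a n * sInf (f '' Set.Icc 0 1)
        - b n * sInf (g '' {γ | γ ∈ Set.Icc (0:ℝ) 1 ∧ f γ = sInf (f '' Set.Icc 0 1)}))
        / b n) atTop (nhds 0) :=
  inf_asymptotic_expansion_general m f g G hf hg hG a b c ha hb hba hcb
end

section
/- Let V_c = V(P_{X|Y}|P_Y) > 0 and V_j = V(P_XY) > 0, let θ1 > 0, θ1 + θ2 > 0, and assume the strict inequalities (V_j − V_c)/(V_j + V_c) < θ2/θ1 < (V_j − V_c)/(2 V_c) hold (which force V_j ≠ V_c and θ2 ≠ 0). Define f : [0,1] → ℝ by f(γ) = (θ1 + (1−γ)θ2)² / (2(γ V_c + (1−γ) V_j)) and set γ* = −θ1/θ2 + (V_c + V_j)/(V_j − V_c). Then γ* ∈ (0,1), f attains its minimum over [0,1] at γ*, the minimum value is f(γ*) = 2 θ2 (θ1 V_j − (θ1+θ2) V_c) / (V_j − V_c)², and moreover f(γ*) < (θ1+θ2)² / (2 V_j). -/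
open Real Filter Set

noncomputable section

namespace SWMD

variable {X Y : Type} [Fintype X] [Fintype Y]

/-!
Writing `D(γ) = γ V_c + (1 - γ) V_j`, the numerator `θ1 + (1 - γ) θ2` is an affine function
`a + b D(γ)` of the denominator, with `b = θ2 / (V_j - V_c)`. Completing the square,
`(a + b D)² / (2D) = 2ab + (a - b D)² / (2D) ≥ 2ab` for `D > 0`, with equality exactly when
`D = a / b`; the ratio bounds on `θ2 / θ1` say that this happens at a point `γ*` of `(0, 1)`.
At `γ = 0` we have `D = V_j ≠ D(γ*)`, which gives the strict inequality.
-/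

section CompletingTheSquare

variable {a b D : ℝ}

theorem sq_add_mul_div_sub_eq (hD : D ≠ 0) :
    (a + b * D) ^ 2 / (2 * D) - 2 * a * b = (a - b * D) ^ 2 / (2 * D) := by
  field_simp
  ring

theorem two_mul_le_sq_add_mul_div (hD : 0 < D) : 2 * a * b ≤ (a + b * D) ^ 2 / (2 * D) := by
  have hsq : 0 ≤ (a - b * D) ^ 2 / (2 * D) := by positivity
  linarith [sq_add_mul_div_sub_eq (a := a) (b := b) hD.ne']

theorem two_mul_lt_sq_add_mul_div (hD : 0 < D) (h : a ≠ b * D) :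
    2 * a * b < (a + b * D) ^ 2 / (2 * D) := by
  have hsq : 0 < (a - b * D) ^ 2 / (2 * D) := by
    have := sub_ne_zero.2 h
    positivity
  linarith [sq_add_mul_div_sub_eq (a := a) (b := b) hD.ne']

theorem sq_add_mul_div_eq_of_eq (hD : D ≠ 0) (h : a = b * D) :
    (a + b * D) ^ 2 / (2 * D) = 2 * a * b := by
  subst h
  field_simp
  ring

end CompletingTheSquare

section Minimizer

variable {Vc Vj θ1 θ2 γ : ℝ}

theorem ratio_bounds_iff (hVc : 0 < Vc) (hVj : 0 < Vj) (hθ1 : 0 < θ1) :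
    ((Vj - Vc) / (Vj + Vc) < θ2 / θ1 ∧ θ2 / θ1 < (Vj - Vc) / (2 * Vc)) ↔
      ((Vj - Vc) * θ1 < θ2 * (Vj + Vc) ∧ θ2 * (2 * Vc) < (Vj - Vc) * θ1) := by
  rw [div_lt_div_iff₀ (by positivity) hθ1, div_lt_div_iff₀ hθ1 (by positivity)]

theorem mul_sub_pos_of_bounds (hlow : (Vj - Vc) * θ1 < θ2 * (Vj + Vc))
    (hhigh : θ2 * (2 * Vc) < (Vj - Vc) * θ1) : 0 < θ2 * (Vj - Vc) := by
  linarith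

theorem minimizer_mem_Ioo (hlow : (Vj - Vc) * θ1 < θ2 * (Vj + Vc))
    (hhigh : θ2 * (2 * Vc) < (Vj - Vc) * θ1) :
    -θ1 / θ2 + (Vc + Vj) / (Vj - Vc) ∈ Ioo (0 : ℝ) 1 := by
  have hpos := mul_sub_pos_of_bounds hlow hhigh
  have hθ2 : θ2 ≠ 0 := left_ne_zero_of_mul hpos.ne'
  have hΔ : Vj - Vc ≠ 0 := right_ne_zero_of_mul hpos.ne'
  have hγ : -θ1 / θ2 + (Vc + Vj) / (Vj - Vc) =
      (θ2 * (Vc + Vj) - θ1 * (Vj - Vc)) / (θ2 * (Vj - Vc)) := by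
    field_simp
    ring
  rw [hγ, mem_Ioo, div_lt_one hpos]
  exact ⟨div_pos (by linarith) hpos, by linarith⟩

theorem convex_combination_pos (hVc : 0 < Vc) (hVj : 0 < Vj) (hγ : γ ∈ Icc (0 : ℝ) 1) :
    0 < γ * Vc + (1 - γ) * Vj :=
  convex_Ioi (0 : ℝ) hVc hVj hγ.1 (sub_nonneg.2 hγ.2) (add_sub_cancel _ _)

theorem numerator_eq_affine_of_denominator (hΔ : Vj - Vc ≠ 0) :
    θ1 + (1 - γ) * θ2 =
      (θ1 * (Vj - Vc) - θ2 * Vc) / (Vj - Vc) + θ2 / (Vj - Vc) * (γ * Vc + (1 - γ) * Vj) := by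
  field_simp
  ring

theorem denominator_eq_ratio_at_minimizer (hθ2 : θ2 ≠ 0) (hΔ : Vj - Vc ≠ 0)
    (hγ : γ = -θ1 / θ2 + (Vc + Vj) / (Vj - Vc)) :
    (θ1 * (Vj - Vc) - θ2 * Vc) / (Vj - Vc) = θ2 / (Vj - Vc) * (γ * Vc + (1 - γ) * Vj) := by
  subst hγ
  field_simp
  ring

end Minimizer

theorem interior_minimizer_general
    (P : X → Y → ℝ)
    (hVc : 0 < VcondXY P) (hVj : 0 < Vjoint P)
    (θ1 θ2 : ℝ) (hθ1 : 0 < θ1)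
    (hlow : (Vjoint P - VcondXY P) / (Vjoint P + VcondXY P) < θ2 / θ1)
    (hhigh : θ2 / θ1 < (Vjoint P - VcondXY P) / (2 * VcondXY P))
    (f : ℝ → ℝ)
    (hf : ∀ γ : ℝ, f γ = (θ1 + (1 - γ) * θ2) ^ 2 /
        (2 * (γ * VcondXY P + (1 - γ) * Vjoint P)))
    (γs : ℝ)
    (hγs : γs = -θ1 / θ2 + (VcondXY P + Vjoint P) / (Vjoint P - VcondXY P)) :
    γs ∈ Set.Ioo (0:ℝ) 1 ∧
    (∀ γ ∈ Set.Icc (0:ℝ) 1, f γs ≤ f γ) ∧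
    f γs = 2 * θ2 * (θ1 * Vjoint P - (θ1 + θ2) * VcondXY P) /
      (Vjoint P - VcondXY P) ^ 2 ∧
    f γs < (θ1 + θ2) ^ 2 / (2 * Vjoint P) := by
  set Vc := VcondXY P
  set Vj := Vjoint P
  obtain ⟨h1, h2⟩ := (ratio_bounds_iff hVc hVj hθ1).1 ⟨hlow, hhigh⟩
  have hpos := mul_sub_pos_of_bounds h1 h2
  have hθ2 : θ2 ≠ 0 := left_ne_zero_of_mul hpos.ne'
  have hΔ : Vj - Vc ≠ 0 := right_ne_zero_of_mul hpos.ne'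
  have hγs_mem : γs ∈ Ioo (0 : ℝ) 1 := hγs ▸ minimizer_mem_Ioo h1 h2
  set a := (θ1 * (Vj - Vc) - θ2 * Vc) / (Vj - Vc)
  set b := θ2 / (Vj - Vc)
  set D := fun γ : ℝ => γ * Vc + (1 - γ) * Vj
  have hfD : ∀ γ, f γ = (a + b * D γ) ^ 2 / (2 * D γ) := fun γ => by
    rw [hf, numerator_eq_affine_of_denominator hΔ]
  have ha : a = b * D γs := denominator_eq_ratio_at_minimizer hθ2 hΔ hγs
  have hDγs : 0 < D γs := convex_combination_pos hVc hVj (Ioo_subset_Icc_self hγs_mem)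
  have hmin : f γs = 2 * a * b := by
    rw [hfD]
    exact sq_add_mul_div_eq_of_eq hDγs.ne' ha
  refine ⟨hγs_mem, fun γ hγ => ?_, ?_, ?_⟩
  · rw [hmin, hfD]
    exact two_mul_le_sq_add_mul_div (convex_combination_pos hVc hVj hγ)
  · rw [hmin]
    simp only [a, b]
    field_simp
    ring
  · have hf0 : f 0 = (θ1 + θ2) ^ 2 / (2 * Vj) := by simp [hf]
    rw [← hf0, hmin, hfD]
    refine two_mul_lt_sq_add_mul_div (by simpa [D]) fun h => ?_
    have hD : D γs = D 0 := mul_left_cancel₀ (div_ne_zero hθ2 hΔ) (ha.symm.trans h)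
    have : γs * (Vj - Vc) = 0 := by simp only [D] at hD; linarith
    exact hγs_mem.1.ne' (mul_eq_zero.1 this |>.resolve_right hΔ)

/-- With `V_c = V(P_{X|Y}|P_Y) > 0`, `V_j = V(P_XY) > 0`, `θ1 > 0`,
`θ1 + θ2 > 0` and `(V_j−V_c)/(V_j+V_c) < θ2/θ1 < (V_j−V_c)/(2V_c)`, the
minimizer `γ* = −θ1/θ2 + (V_c+V_j)/(V_j−V_c)` of
`f(γ) = (θ1+(1−γ)θ2)²/(2(γ V_c+(1−γ)V_j))` lies in `(0,1)`, `f` attains its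
minimum over `[0,1]` at `γ*`, the minimum value equals
`2θ2(θ1 V_j − (θ1+θ2)V_c)/(V_j−V_c)²`, and this value is strictly smaller than
`(θ1+θ2)²/(2V_j)`. -/
theorem interior_minimizer [Nonempty X] [Nonempty Y]
    (P : X → Y → ℝ) (hP : IsPMF2 P)
    (hVc : 0 < VcondXY P) (hVj : 0 < Vjoint P)
    (θ1 θ2 : ℝ) (hθ1 : 0 < θ1) (hsum : 0 < θ1 + θ2)
    (hlow : (Vjoint P - VcondXY P) / (Vjoint P + VcondXY P) < θ2 / θ1)
    (hhigh : θ2 / θ1 < (Vjoint P - VcondXY P) / (2 * VcondXY P))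
    (f : ℝ → ℝ)
    (hf : ∀ γ : ℝ, f γ = (θ1 + (1 - γ) * θ2) ^ 2 /
        (2 * (γ * VcondXY P + (1 - γ) * Vjoint P)))
    (γs : ℝ)
    (hγs : γs = -θ1 / θ2 + (VcondXY P + Vjoint P) / (Vjoint P - VcondXY P)) :
    γs ∈ Set.Ioo (0:ℝ) 1 ∧
    (∀ γ ∈ Set.Icc (0:ℝ) 1, f γs ≤ f γ) ∧
    f γs = 2 * θ2 * (θ1 * Vjoint P - (θ1 + θ2) * VcondXY P) /
      (Vjoint P - VcondXY P) ^ 2 ∧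
    f γs < (θ1 + θ2) ^ 2 / (2 * Vjoint P) :=
  interior_minimizer_general P hVc hVj θ1 θ2 hθ1 hlow hhigh f hf γs hγs

end SWMD
end
end
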